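/- arXiv:1907.02314 — 3 statements merged into one kernel-verified Lean document; each statement's English description precedes it below -/
import Mathlib

section
/- (Corollary 1, integral form of passivity.) If γ > 0 is a constant, U : [0,∞) → ℝ is continuous and the actuated boundary condition C·w_z(1,t) = −γ·U(t) holds for all t ≥ 0, then for every T ≥ 0, H(T) − H(0) ≤ ∫₀ᵀ (−γ·U(t))·w_t(1,t) dt. -/
/-!
Differentiating the energy density in time and using the PDE, the energy rate
`∫₀¹ (C w_z w_zt + ρ w_t w_tt) dz` becomes `∫₀¹ C (w_zz w_t + w_z w_zt) dz − b ∫₀¹ w_t² dz`.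
The first integral is an exact `z`-derivative, so it reduces to the boundary power
`C w_z(1,t) w_t(1,t)`: the term at `z = 0` vanishes because clamping forces `w_t(0,t) = 0`.
Dropping the nonpositive damping term and integrating in time (Fubini) gives the inequality.
-/

open MeasureTheory intervalIntegral Set Function
open scoped Interval

theorem intervalIntegral_integral_swap_of_continuous {f : ℝ → ℝ → ℝ}
    (hf : Continuous (uncurry f)) (a b c d : ℝ) :
    ∫ x in a..b, ∫ y in c..d, f x y = ∫ y in c..d, ∫ x in a..b, f x y := by
  have hint :
      Integrable (uncurry f) ((volume.restrict (Ι a b)).prod (volume.restrict (Ι c d))) := by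
    rw [Measure.prod_restrict]
    exact (hf.continuousOn.integrableOn_compact (isCompact_uIcc.prod isCompact_uIcc)).mono_set
      (prod_mono uIoc_subset_uIcc uIoc_subset_uIcc)
  simp only [intervalIntegral_eq_integral_uIoc, MeasureTheory.integral_smul]
  rw [integral_integral_swap hint, smul_comm]

theorem integral_sub_integral_eq_integral_integral_of_hasDerivAt {f f' : ℝ → ℝ → ℝ}
    (hf : Continuous (uncurry f)) (hf' : Continuous (uncurry f'))
    (hderiv : ∀ x t, HasDerivAt (f x ·) (f' x t) t) (a b s T : ℝ) :
    (∫ x in a..b, f x T) - ∫ x in a..b, f x s = ∫ t in s..T, ∫ x in a..b, f' x t := by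
  rw [← intervalIntegral_integral_swap_of_continuous hf',
    ← intervalIntegral.integral_sub ((hf.uncurry_right T).intervalIntegrable a b)
      ((hf.uncurry_right s).intervalIntegrable a b)]
  exact integral_congr fun x _ =>
    (integral_eq_sub_of_hasDerivAt (fun t _ => hderiv x t)
      ((hf'.uncurry_left x).intervalIntegrable s T)).symm

theorem HasDerivAt.eq_zero_of_eqOn_Ici {f : ℝ → ℝ} {f' a c t : ℝ} (hf : HasDerivAt f f' t)
    (hc : EqOn f (fun _ => c) (Ici a)) (ht : a ≤ t) : f' = 0 :=
  (uniqueDiffOn_Ici a t ht).eq_deriv _ hf.hasDerivWithinAt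
    ((hasDerivWithinAt_const t (Ici a) c).congr hc (hc ht))

noncomputable def beamEnergy (C ρ : ℝ) (wz wt : ℝ → ℝ → ℝ) (t : ℝ) : ℝ :=
  (1/2) * ∫ z in (0:ℝ)..1, (C * (wz z t)^2 + ρ * (wt z t)^2)

section Beam

variable {C ρ b : ℝ} {wz wt wzz wzt wtt : ℝ → ℝ → ℝ}

theorem beamEnergy_sub_eq_integral_integral
    (hwzt' : ∀ z t, HasDerivAt (wz z ·) (wzt z t) t)
    (hwtt : ∀ z t, HasDerivAt (wt z ·) (wtt z t) t)
    (hwzc : Continuous (uncurry wz)) (hwtc : Continuous (uncurry wt))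
    (hwztc : Continuous (uncurry wzt)) (hwttc : Continuous (uncurry wtt)) (s T : ℝ) :
    beamEnergy C ρ wz wt T - beamEnergy C ρ wz wt s =
      ∫ t in s..T, ∫ z in (0:ℝ)..1, (C * (wz z t * wzt z t) + ρ * (wt z t * wtt z t)) := by
  unfold beamEnergy
  rw [← intervalIntegral.integral_const_mul, ← intervalIntegral.integral_const_mul]
  refine integral_sub_integral_eq_integral_integral_of_hasDerivAt
    (f := fun z t => (1/2) * (C * (wz z t)^2 + ρ * (wt z t)^2))
    (f' := fun z t => C * (wz z t * wzt z t) + ρ * (wt z t * wtt z t))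
    (by fun_prop) (by fun_prop) (fun z t => ?_) 0 1 s T
  refine ((((hwzt' z t).pow 2).const_mul C).add (((hwtt z t).pow 2).const_mul ρ)).const_mul (1/2)
    |>.congr_deriv ?_
  push_cast
  ring

theorem integral_energyRate_eq_boundaryPower_sub_dissipation {t : ℝ}
    (hpde : ∀ z ∈ Icc (0:ℝ) 1, ρ * wtt z t = C * wzz z t - b * wt z t) (hwt0 : wt 0 t = 0)
    (hwzz : ∀ z, HasDerivAt (wz · t) (wzz z t) z) (hwzt : ∀ z, HasDerivAt (wt · t) (wzt z t) z)
    (hwzc : Continuous (uncurry wz)) (hwtc : Continuous (uncurry wt))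
    (hwzzc : Continuous (uncurry wzz)) (hwztc : Continuous (uncurry wzt)) :
    ∫ z in (0:ℝ)..1, (C * (wz z t * wzt z t) + ρ * (wt z t * wtt z t)) =
      C * wz 1 t * wt 1 t - b * ∫ z in (0:ℝ)..1, (wt z t)^2 := by
  have hparts : ∫ z in (0:ℝ)..1, (wzz z t * wt z t + wz z t * wzt z t) = wz 1 t * wt 1 t := by
    rw [integral_deriv_mul_eq_sub (fun z _ => hwzz z) (fun z _ => hwzt z)
      ((hwzzc.uncurry_right t).intervalIntegrable 0 1)
      ((hwztc.uncurry_right t).intervalIntegrable 0 1), hwt0, mul_zero, sub_zero]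
  rw [mul_assoc, ← hparts, ← intervalIntegral.integral_const_mul,
    ← intervalIntegral.integral_const_mul,
    ← intervalIntegral.integral_sub (Continuous.intervalIntegrable (by fun_prop) 0 1)
      (Continuous.intervalIntegrable (by fun_prop) 0 1)]
  refine integral_congr fun z hz => ?_
  rw [uIcc_of_le zero_le_one] at hz
  linear_combination wt z t * hpde z hz

theorem beamEnergy_sub_le_integral_boundaryPower (hb : 0 ≤ b)
    (hpde : ∀ z ∈ Icc (0:ℝ) 1, ∀ t, 0 ≤ t → ρ * wtt z t = C * wzz z t - b * wt z t)
    (hwt0 : ∀ t, 0 ≤ t → wt 0 t = 0)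
    (hwzz : ∀ z t, HasDerivAt (wz · t) (wzz z t) z)
    (hwzt : ∀ z t, HasDerivAt (wt · t) (wzt z t) z)
    (hwzt' : ∀ z t, HasDerivAt (wz z ·) (wzt z t) t)
    (hwtt : ∀ z t, HasDerivAt (wt z ·) (wtt z t) t)
    (hwzc : Continuous (uncurry wz)) (hwtc : Continuous (uncurry wt))
    (hwzzc : Continuous (uncurry wzz)) (hwztc : Continuous (uncurry wzt))
    (hwttc : Continuous (uncurry wtt)) {T : ℝ} (hT : 0 ≤ T) :
    beamEnergy C ρ wz wt T - beamEnergy C ρ wz wt 0 ≤ ∫ t in (0:ℝ)..T, C * wz 1 t * wt 1 t := by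
  rw [beamEnergy_sub_eq_integral_integral hwzt' hwtt hwzc hwtc hwztc hwttc]
  refine integral_mono_on hT ?_ ?_ fun t ht => ?_
  · exact (continuous_parametric_intervalIntegral_of_continuous'
      (f := fun t z => C * (wz z t * wzt z t) + ρ * (wt z t * wtt z t)) (by fun_prop) 0 1
      ).intervalIntegrable 0 T
  · exact (continuous_const.mul (hwzc.uncurry_left 1)).mul (hwtc.uncurry_left 1)
      |>.intervalIntegrable 0 T
  · rw [integral_energyRate_eq_boundaryPower_sub_dissipation (fun z hz => hpde z hz t ht.1)
      (hwt0 t ht.1) (hwzz · t) (hwzt · t) hwzc hwtc hwzzc hwztc]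
    have hdissipation : 0 ≤ b * ∫ z in (0:ℝ)..1, (wt z t)^2 :=
      mul_nonneg hb (integral_nonneg zero_le_one fun z _ => sq_nonneg _)
    linarith

end Beam

theorem passivity_integral_general
    (ρ C b : ℝ) (hb : 0 < b)
    (w wz wt wzz wzt wtt : ℝ → ℝ → ℝ)
    (hwt : ∀ z t : ℝ, HasDerivAt (fun τ => w z τ) (wt z t) t)
    (hwzz : ∀ z t : ℝ, HasDerivAt (fun ζ => wz ζ t) (wzz z t) z)
    (hwzt : ∀ z t : ℝ, HasDerivAt (fun ζ => wt ζ t) (wzt z t) z)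
    (hwzt' : ∀ z t : ℝ, HasDerivAt (fun τ => wz z τ) (wzt z t) t)
    (hwtt : ∀ z t : ℝ, HasDerivAt (fun τ => wt z τ) (wtt z t) t)
    (hwzc : Continuous (Function.uncurry wz))
    (hwtc : Continuous (Function.uncurry wt))
    (hwzzc : Continuous (Function.uncurry wzz))
    (hwztc : Continuous (Function.uncurry wzt))
    (hwttc : Continuous (Function.uncurry wtt))
    (hpde : ∀ z ∈ Set.Icc (0:ℝ) 1, ∀ t : ℝ, 0 ≤ t →
      ρ * wtt z t = C * wzz z t - b * wt z t)
    (hclamp : ∀ t : ℝ, 0 ≤ t → w 0 t = 0)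
    (γ : ℝ) (U : ℝ → ℝ)
    (hbc : ∀ t : ℝ, 0 ≤ t → C * wz 1 t = -γ * U t) :
    ∀ T : ℝ, 0 ≤ T →
      ((1/2) * ∫ z in (0:ℝ)..1, (C * (wz z T)^2 + ρ * (wt z T)^2)) - ((1/2) * ∫ z in (0:ℝ)..1, (C * (wz z (0:ℝ))^2 + ρ * (wt z (0:ℝ))^2))
        ≤ ∫ t in (0:ℝ)..T, (-γ * U t) * wt 1 t := by
  intro T hT
  have hwt0 : ∀ t, 0 ≤ t → wt 0 t = 0 := fun t ht =>
    (hwt 0 t).eq_zero_of_eqOn_Ici (fun τ hτ => hclamp τ hτ) ht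
  calc beamEnergy C ρ wz wt T - beamEnergy C ρ wz wt 0
      ≤ ∫ t in (0:ℝ)..T, C * wz 1 t * wt 1 t :=
        beamEnergy_sub_le_integral_boundaryPower hb.le hpde hwt0 hwzz hwzt hwzt' hwtt
          hwzc hwtc hwzzc hwztc hwttc hT
    _ = ∫ t in (0:ℝ)..T, (-γ * U t) * wt 1 t := integral_congr fun t ht => by
        rw [uIcc_of_le hT] at ht
        rw [← hbc t ht.1]

/-- Corollary 1, integral form: H(T) − H(0) ≤ ∫₀ᵀ (−γ·U(t))·w_t(1,t) dt. -/
theorem passivity_integral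
    (ρ C b : ℝ) (hρ : 0 < ρ) (hC : 0 < C) (hb : 0 < b)
    (w wz wt wzz wzt wtt : ℝ → ℝ → ℝ)
    (hwz : ∀ z t : ℝ, HasDerivAt (fun ζ => w ζ t) (wz z t) z)
    (hwt : ∀ z t : ℝ, HasDerivAt (fun τ => w z τ) (wt z t) t)
    (hwzz : ∀ z t : ℝ, HasDerivAt (fun ζ => wz ζ t) (wzz z t) z)
    (hwzt : ∀ z t : ℝ, HasDerivAt (fun ζ => wt ζ t) (wzt z t) z)
    (hwzt' : ∀ z t : ℝ, HasDerivAt (fun τ => wz z τ) (wzt z t) t)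
    (hwtt : ∀ z t : ℝ, HasDerivAt (fun τ => wt z τ) (wtt z t) t)
    (hwzc : Continuous (Function.uncurry wz))
    (hwtc : Continuous (Function.uncurry wt))
    (hwzzc : Continuous (Function.uncurry wzz))
    (hwztc : Continuous (Function.uncurry wzt))
    (hwttc : Continuous (Function.uncurry wtt))
    (hpde : ∀ z ∈ Set.Icc (0:ℝ) 1, ∀ t : ℝ, 0 ≤ t →
      ρ * wtt z t = C * wzz z t - b * wt z t)
    (hclamp : ∀ t : ℝ, 0 ≤ t → w 0 t = 0)
    (γ : ℝ) (hγ : 0 < γ) (U : ℝ → ℝ) (hUc : Continuous U)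
    (hbc : ∀ t : ℝ, 0 ≤ t → C * wz 1 t = -γ * U t) :
    ∀ T : ℝ, 0 ≤ T →
      ((1/2) * ∫ z in (0:ℝ)..1, (C * (wz z T)^2 + ρ * (wt z T)^2)) - ((1/2) * ∫ z in (0:ℝ)..1, (C * (wz z (0:ℝ))^2 + ρ * (wt z (0:ℝ))^2))
        ≤ ∫ t in (0:ℝ)..T, (-γ * U t) * wt 1 t :=
  passivity_integral_general ρ C b hb w wz wt wzz wzt wtt hwt hwzz hwzt hwzt' hwtt hwzc hwtc hwzzc
    hwztc hwttc hpde hclamp γ U hbc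
end

section
/- (Proposition 1, new passivity property.) If additionally γ > 0 is a constant and U : [0,∞) → ℝ is continuously differentiable with C·w_z(1,t) = −γ·U(t) for all t ≥ 0 (hence C·w_zt(1,t) = −γ·U'(t)), then dS/dt(t) ≤ −γ·U'(t)·w_tt(1,t) for all t ≥ 0, and consequently for every T ≥ 0, S(T) − S(0) ≤ ∫₀ᵀ (−γ·w_tt(1,t))·U'(t) dt; that is, the beam is passive with port variables U'(t) and −γ·w_tt(1,t). -/
/-!
Differentiating the storage function under the integral sign gives
`S' = ∫₀¹ (C w_zt w_ztt + ρ w_tt w_ttt) dz`. By the time-differentiated wave equation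
`ρ w_ttt = C w_zzt - b w_tt`, the integrand is `C ∂_z (w_zt w_tt) - b w_tt²`, so
`S' = C w_zt(1) w_tt(1) - C w_zt(0) w_tt(0) - b ∫₀¹ w_tt² dz`.
The clamped end gives `w_tt(0) = 0` and the boundary control gives `C w_zt(1) = -γ U'`,
hence `S' ≤ -γ U' w_tt(1)`; integrating in time yields the passivity inequality.
-/

open MeasureTheory intervalIntegral Set Metric Function

theorem HasDerivAt.eq_of_eqOn_Ici {E : Type*} [NormedAddCommGroup E] [NormedSpace ℝ E]
    {f g : ℝ → E} {f' g' : E} {t : ℝ} (hf : HasDerivAt f f' t) (hg : HasDerivAt g g' t)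
    (h : EqOn f g (Ici t)) : f' = g' :=
  (uniqueDiffWithinAt_Ici t).eq_deriv _ hf.hasDerivWithinAt
    (hg.hasDerivWithinAt.congr h (h self_mem_Ici))

theorem hasDerivAt_intervalIntegral_of_continuous {E : Type*} [NormedAddCommGroup E]
    [NormedSpace ℝ E] {F F' : ℝ → ℝ → E} {a b : ℝ}
    (hF : ∀ t z, HasDerivAt (F · z) (F' t z) t) (hFc : ∀ t, Continuous (F t))
    (hF'c : Continuous (uncurry F')) (t₀ : ℝ) :
    HasDerivAt (fun t => ∫ z in a..b, F t z) (∫ z in a..b, F' t₀ z) t₀ := by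
  obtain ⟨M, hM⟩ := ((isCompact_closedBall t₀ 1).prod isCompact_uIcc).exists_bound_of_continuousOn
    (hF'c.continuousOn (s := closedBall t₀ 1 ×ˢ uIcc a b))
  refine (hasDerivAt_integral_of_dominated_loc_of_deriv_le (bound := fun _ => M)
    (ball_mem_nhds t₀ one_pos) (.of_forall fun t => (hFc t).aestronglyMeasurable)
    ((hFc t₀).intervalIntegrable a b) (hF'c.uncurry_left t₀).aestronglyMeasurable ?_
    intervalIntegrable_const ?_).2
  · exact .of_forall fun z hz t ht =>
      hM (t, z) ⟨ball_subset_closedBall ht, uIoc_subset_uIcc hz⟩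
  · exact .of_forall fun z _ t _ => hF t z

theorem hasDerivAt_half_integral_energy {ρ C a b : ℝ} {u v u' v' : ℝ → ℝ → ℝ}
    (hu : ∀ z t, HasDerivAt (u z ·) (u' z t) t) (hv : ∀ z t, HasDerivAt (v z ·) (v' z t) t)
    (huc : Continuous (uncurry u)) (hvc : Continuous (uncurry v))
    (hu'c : Continuous (uncurry u')) (hv'c : Continuous (uncurry v')) (t : ℝ) :
    HasDerivAt (fun τ => (1/2) * ∫ z in a..b, (C * u z τ ^ 2 + ρ * v z τ ^ 2))
      (∫ z in a..b, (C * u z t * u' z t + ρ * v z t * v' z t)) t := by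
  have hswap {f : ℝ → ℝ → ℝ} (hf : Continuous (uncurry f)) :
      Continuous fun p : ℝ × ℝ => f p.2 p.1 := hf.comp continuous_swap
  have h := hasDerivAt_intervalIntegral_of_continuous (a := a) (b := b)
    (F := fun τ z => C * u z τ ^ 2 + ρ * v z τ ^ 2)
    (F' := fun τ z => 2 * (C * u z τ * u' z τ + ρ * v z τ * v' z τ))
    (fun τ z => ((((hu z τ).fun_pow 2).const_mul C).fun_add
      (((hv z τ).fun_pow 2).const_mul ρ)).congr_deriv (by ring))
    (fun τ => by have := huc.uncurry_right τ; have := hvc.uncurry_right τ; fun_prop)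
    (by have := hswap huc; have := hswap hvc; have := hswap hu'c; have := hswap hv'c
        simp only [uncurry_def]; fun_prop) t
  exact (h.const_mul (1/2)).congr_deriv (by rw [intervalIntegral.integral_const_mul]; ring)

theorem integral_energy_rate_eq {a b ρ C β : ℝ} {p q p' q' r : ℝ → ℝ}
    (hp : ∀ z ∈ uIcc a b, HasDerivAt p (p' z) z) (hq : ∀ z ∈ uIcc a b, HasDerivAt q (q' z) z)
    (hp'c : ContinuousOn p' (uIcc a b)) (hq'c : ContinuousOn q' (uIcc a b))
    (hr : ∀ z ∈ uIcc a b, ρ * r z = C * p' z - β * q z) :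
    ∫ z in a..b, (C * p z * q' z + ρ * q z * r z)
      = C * p b * q b - C * p a * q a - β * ∫ z in a..b, q z ^ 2 := by
  have hpc : ContinuousOn p (uIcc a b) := fun z hz => (hp z hz).continuousAt.continuousWithinAt
  have hqc : ContinuousOn q (uIcc a b) := fun z hz => (hq z hz).continuousAt.continuousWithinAt
  have hparts : ∫ z in a..b, (p' z * q z + p z * q' z) = p b * q b - p a * q a :=
    integral_deriv_mul_eq_sub hp hq (hp'c.intervalIntegrable) (hq'c.intervalIntegrable)
  calc ∫ z in a..b, (C * p z * q' z + ρ * q z * r z)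
      = ∫ z in a..b, (C * (p' z * q z + p z * q' z) - β * q z ^ 2) :=
        integral_congr fun z hz => by linear_combination q z * hr z hz
    _ = C * p b * q b - C * p a * q a - β * ∫ z in a..b, q z ^ 2 := by
        rw [intervalIntegral.integral_sub, intervalIntegral.integral_const_mul,
          intervalIntegral.integral_const_mul, hparts]
        · ring
        · exact ((hp'c.mul hqc).add (hpc.mul hq'c)).intervalIntegrable.const_mul C
        · exact (hqc.pow 2).intervalIntegrable.const_mul β

theorem new_passivity_property_general
    (ρ C b : ℝ) (hb : 0 < b)
    (w wz wt wzz wzt wtt : ℝ → ℝ → ℝ)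
    (hwt : ∀ z t : ℝ, HasDerivAt (fun τ => w z τ) (wt z t) t)
    (hwzt' : ∀ z t : ℝ, HasDerivAt (fun τ => wz z τ) (wzt z t) t)
    (hwtt : ∀ z t : ℝ, HasDerivAt (fun τ => wt z τ) (wtt z t) t)
    (hwztc : Continuous (Function.uncurry wzt))
    (hwttc : Continuous (Function.uncurry wtt))
    (hpde : ∀ z ∈ Set.Icc (0:ℝ) 1, ∀ t : ℝ, 0 ≤ t →
      ρ * wtt z t = C * wzz z t - b * wt z t)
    (hclamp : ∀ t : ℝ, 0 ≤ t → w 0 t = 0)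
    (wzzt wztt wttt : ℝ → ℝ → ℝ)
    (hwzzt : ∀ z t : ℝ, HasDerivAt (fun τ => wzz z τ) (wzzt z t) t)
    (hwzzt' : ∀ z t : ℝ, HasDerivAt (fun ζ => wzt ζ t) (wzzt z t) z)
    (hwztt : ∀ z t : ℝ, HasDerivAt (fun τ => wzt z τ) (wztt z t) t)
    (hwztt' : ∀ z t : ℝ, HasDerivAt (fun ζ => wtt ζ t) (wztt z t) z)
    (hwttt : ∀ z t : ℝ, HasDerivAt (fun τ => wtt z τ) (wttt z t) t)
    (hwzztc : Continuous (Function.uncurry wzzt))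
    (hwzttc : Continuous (Function.uncurry wztt))
    (hwtttc : Continuous (Function.uncurry wttt))
    (γ : ℝ) (U U' : ℝ → ℝ)
    (hU : ∀ t : ℝ, HasDerivAt U (U' t) t) (hU'c : Continuous U')
    (hbc : ∀ t : ℝ, 0 ≤ t → C * wz 1 t = -γ * U t) :
    (∀ t : ℝ, 0 ≤ t →
      ∃ S' : ℝ, HasDerivAt (fun τ => (1/2) * ∫ z in (0:ℝ)..1, (C * (wzt z τ)^2 + ρ * (wtt z τ)^2)) S' t ∧
        S' ≤ -γ * U' t * wtt 1 t) ∧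
    ∀ T : ℝ, 0 ≤ T →
      ((1/2) * ∫ z in (0:ℝ)..1, (C * (wzt z T)^2 + ρ * (wtt z T)^2)) - ((1/2) * ∫ z in (0:ℝ)..1, (C * (wzt z (0:ℝ))^2 + ρ * (wtt z (0:ℝ))^2))
        ≤ ∫ t in (0:ℝ)..T, (-γ * wtt 1 t) * U' t := by
  have hpde_t : ∀ t, 0 ≤ t → ∀ z ∈ uIcc (0:ℝ) 1, ρ * wttt z t = C * wzzt z t - b * wtt z t :=
    fun t ht z hz => ((hwttt z t).const_mul ρ).eq_of_eqOn_Ici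
      (((hwzzt z t).const_mul C).sub ((hwtt z t).const_mul b))
      fun τ hτ => hpde z (uIcc_of_le (zero_le_one' ℝ) ▸ hz) τ (ht.trans hτ)
  have hclamp_tt : ∀ t, 0 ≤ t → wtt 0 t = 0 := fun t ht =>
    (hwtt 0 t).eq_of_eqOn_Ici (hasDerivAt_const t 0) fun τ hτ =>
      (hwt 0 τ).eq_of_eqOn_Ici (hasDerivAt_const τ 0) fun s hs => hclamp s (ht.trans (hτ.trans hs))
  have hbc_t : ∀ t, 0 ≤ t → C * wzt 1 t = -γ * U' t := fun t ht =>
    ((hwzt' 1 t).const_mul C).eq_of_eqOn_Ici ((hU t).const_mul (-γ))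
      fun τ hτ => hbc τ (ht.trans hτ)
  have hS := hasDerivAt_half_integral_energy (a := 0) (b := 1) (C := C) (ρ := ρ)
    hwztt hwttt hwztc hwttc hwzttc hwtttc
  have hS_le : ∀ t, 0 ≤ t → ∫ z in (0:ℝ)..1, (C * wzt z t * wztt z t + ρ * wtt z t * wttt z t)
      ≤ -γ * U' t * wtt 1 t := by
    intro t ht
    rw [integral_energy_rate_eq (fun z _ => hwzzt' z t) (fun z _ => hwztt' z t)
      (hwzztc.uncurry_right t).continuousOn (hwzttc.uncurry_right t).continuousOn (hpde_t t ht),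
      hclamp_tt t ht, hbc_t t ht]
    have hdamp : 0 ≤ b * ∫ z in (0:ℝ)..1, wtt z t ^ 2 :=
      mul_nonneg hb.le (integral_nonneg zero_le_one fun z _ => sq_nonneg _)
    linarith
  refine ⟨fun t ht => ⟨_, hS t, hS_le t ht⟩, fun T hT => ?_⟩
  refine sub_le_integral_of_hasDeriv_right_of_le hT
    (fun t _ => (hS t).continuousAt.continuousWithinAt) (fun t _ => (hS t).hasDerivWithinAt)
    ((hwttc.uncurry_left 1).const_mul (-γ) |>.fun_mul hU'c).integrableOn_Icc
    fun t ht => (hS_le t ht.1.le).trans_eq (by ring)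

/-- Proposition 1, new passivity property: dS/dt ≤ −γ·U'(t)·w_tt(1,t) and
S(T) − S(0) ≤ ∫₀ᵀ (−γ·w_tt(1,t))·U'(t) dt; the beam is passive with port
variables U'(t) and −γ·w_tt(1,t). -/
theorem new_passivity_property
    (ρ C b : ℝ) (hρ : 0 < ρ) (hC : 0 < C) (hb : 0 < b)
    (w wz wt wzz wzt wtt : ℝ → ℝ → ℝ)
    (hwz : ∀ z t : ℝ, HasDerivAt (fun ζ => w ζ t) (wz z t) z)
    (hwt : ∀ z t : ℝ, HasDerivAt (fun τ => w z τ) (wt z t) t)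
    (hwzz : ∀ z t : ℝ, HasDerivAt (fun ζ => wz ζ t) (wzz z t) z)
    (hwzt : ∀ z t : ℝ, HasDerivAt (fun ζ => wt ζ t) (wzt z t) z)
    (hwzt' : ∀ z t : ℝ, HasDerivAt (fun τ => wz z τ) (wzt z t) t)
    (hwtt : ∀ z t : ℝ, HasDerivAt (fun τ => wt z τ) (wtt z t) t)
    (hwzc : Continuous (Function.uncurry wz))
    (hwtc : Continuous (Function.uncurry wt))
    (hwzzc : Continuous (Function.uncurry wzz))
    (hwztc : Continuous (Function.uncurry wzt))
    (hwttc : Continuous (Function.uncurry wtt))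
    (hpde : ∀ z ∈ Set.Icc (0:ℝ) 1, ∀ t : ℝ, 0 ≤ t →
      ρ * wtt z t = C * wzz z t - b * wt z t)
    (hclamp : ∀ t : ℝ, 0 ≤ t → w 0 t = 0)
    (wzzt wztt wttt : ℝ → ℝ → ℝ)
    (hwzzt : ∀ z t : ℝ, HasDerivAt (fun τ => wzz z τ) (wzzt z t) t)
    (hwzzt' : ∀ z t : ℝ, HasDerivAt (fun ζ => wzt ζ t) (wzzt z t) z)
    (hwztt : ∀ z t : ℝ, HasDerivAt (fun τ => wzt z τ) (wztt z t) t)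
    (hwztt' : ∀ z t : ℝ, HasDerivAt (fun ζ => wtt ζ t) (wztt z t) z)
    (hwttt : ∀ z t : ℝ, HasDerivAt (fun τ => wtt z τ) (wttt z t) t)
    (hwzztc : Continuous (Function.uncurry wzzt))
    (hwzttc : Continuous (Function.uncurry wztt))
    (hwtttc : Continuous (Function.uncurry wttt))
    (γ : ℝ) (hγ : 0 < γ) (U U' : ℝ → ℝ)
    (hU : ∀ t : ℝ, HasDerivAt U (U' t) t) (hU'c : Continuous U')
    (hbc : ∀ t : ℝ, 0 ≤ t → C * wz 1 t = -γ * U t) :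
    (∀ t : ℝ, 0 ≤ t →
      ∃ S' : ℝ, HasDerivAt (fun τ => (1/2) * ∫ z in (0:ℝ)..1, (C * (wzt z τ)^2 + ρ * (wtt z τ)^2)) S' t ∧
        S' ≤ -γ * U' t * wtt 1 t) ∧
    ∀ T : ℝ, 0 ≤ T →
      ((1/2) * ∫ z in (0:ℝ)..1, (C * (wzt z T)^2 + ρ * (wtt z T)^2)) - ((1/2) * ∫ z in (0:ℝ)..1, (C * (wzt z (0:ℝ))^2 + ρ * (wtt z (0:ℝ))^2))
        ≤ ∫ t in (0:ℝ)..T, (-γ * wtt 1 t) * U' t :=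
  new_passivity_property_general ρ C b hb w wz wt wzz wzt wtt hwt hwzt' hwtt hwztc hwttc hpde hclamp
    wzzt wztt wttt hwzzt hwzzt' hwztt hwztt' hwttt hwzztc hwzttc hwtttc γ U U' hU hU'c hbc
end

section
/- (Proposition 2, concrete stability bound for the output-shaping closed loop.) Let additionally K_i, K_p > 0 and p* ∈ ℝ be constants, and suppose the closed-loop boundary condition C·w_zt(1,t) = −K_i·(w_t(1,t) − p*) − K_p·w_tt(1,t) holds for all t ≥ 0. Define M(t) = ∫₀¹ ( (C·w_zt(z,t))² + w_tt(z,t)² + w_zt(z,t)² + (ρ·w_tt(z,t))² ) dz + (w_t(1,t) − p*)². Then for all t ≥ 0, M(t) ≤ (γ₂/γ₁)·M(0), where γ₁ = (1/4)·min{1/C, C, ρ, 1/ρ, 2·K_i} and γ₂ = (1/4)·max{1/C, C, ρ, 1/ρ, 2·K_i}. In particular, the closed-loop equilibrium is stable in the sense of Lyapunov with respect to the norm whose square is M. -/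
/-!
The Lyapunov function is the velocity storage plus the energy of the integral action,
`V(t) = ½ ∫₀¹ (C w_zt² + ρ w_tt²) dz + (K_i/2) (w_t(1,t) − p*)²`.
Differentiating the PDE in time and integrating by parts in `z` gives
`V' = C w_zt(1,t) w_tt(1,t) − b ∫₀¹ w_tt² + K_i (w_t(1,t) − p*) w_tt(1,t)`, the clamped end
contributing nothing because `w_tt(0,t) = 0`; the boundary controller turns this into
`V' = −K_p w_tt(1,t)² − b ∫₀¹ w_tt² ≤ 0`. Splitting `C w_zt² = ½ ((1/C)(C w_zt)² + C w_zt²)` and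
`ρ w_tt² = ½ (ρ w_tt² + (1/ρ)(ρ w_tt)²)` squeezes `V` between `γ₁ M` and `γ₂ M`, whence
`γ₁ M(t) ≤ V(t) ≤ V(0) ≤ γ₂ M(0)`.
-/

open MeasureTheory intervalIntegral Set Function

lemma eqOn_Ici_of_hasDerivAt {f g f' g' : ℝ → ℝ} {a : ℝ}
    (hf : ∀ t, HasDerivAt f (f' t) t) (hg : ∀ t, HasDerivAt g (g' t) t)
    (hf' : Continuous f') (hg' : Continuous g') (hfg : EqOn f g (Ici a)) :
    EqOn f' g' (Ici a) := by
  have hIoi : EqOn f' g' (Ioi a) := fun s hs =>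
    (hf s).unique <| (hg s).congr_of_eventuallyEq <|
      Filter.eventually_of_mem (Ioi_mem_nhds hs) fun τ hτ => hfg (mem_Ici.2 (le_of_lt hτ))
  simpa only [closure_Ioi] using hIoi.closure hf' hg'

lemma hasDerivAt_intervalIntegral_of_hasDerivAt_of_continuous {F g : ℝ → ℝ → ℝ} {a b : ℝ}
    (hF : ∀ z s, HasDerivAt (F z) (g z s) s) (hg : Continuous (uncurry g))
    (hF₀ : IntervalIntegrable (fun z => F z 0) volume a b) (s₀ : ℝ) :
    HasDerivAt (fun s => ∫ z in a..b, F z s) (∫ z in a..b, g z s₀) s₀ := by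
  have hG : Continuous fun σ => ∫ z in a..b, g z σ :=
    continuous_parametric_intervalIntegral_of_continuous'
      (show Continuous (uncurry fun σ z => g z σ) from hg.comp continuous_swap) a b
  have hF_eq : ∀ s, ∫ z in a..b, F z s
      = (∫ z in a..b, F z 0) + ∫ σ in (0:ℝ)..s, ∫ z in a..b, g z σ := by
    intro s
    have hg_int : IntegrableOn (uncurry g) (uIoc a b ×ˢ uIoc 0 s) :=
      (hg.continuousOn.integrableOn_compact (isCompact_uIcc.prod isCompact_uIcc)).mono_set
        (prod_mono uIoc_subset_uIcc uIoc_subset_uIcc)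
    rw [← intervalIntegral_intervalIntegral_swap hg_int, ← intervalIntegral.integral_add hF₀
      ((continuous_parametric_intervalIntegral_of_continuous' hg 0 s).intervalIntegrable a b)]
    refine integral_congr fun z _ => ?_
    rw [integral_eq_sub_of_hasDerivAt (fun σ _ => hF z σ)
      ((hg.uncurry_left z).intervalIntegrable 0 s)]
    ring
  rw [show (fun s => ∫ z in a..b, F z s) = _ from funext hF_eq]
  exact (hG.integral_hasStrictDerivAt 0 s₀).hasDerivAt.const_add _

lemma integral_energy_flux {C ρ b : ℝ} {q p q' p' pt : ℝ → ℝ}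
    (hq : ∀ z, HasDerivAt q (q' z) z) (hp : ∀ z, HasDerivAt p (p' z) z)
    (hq' : Continuous q') (hp' : Continuous p')
    (hpde : ∀ z ∈ Icc (0:ℝ) 1, ρ * pt z = C * q' z - b * p z) (hp₀ : p 0 = 0) :
    ∫ z in (0:ℝ)..1, (C * q z * p' z + ρ * p z * pt z)
      = C * q 1 * p 1 - b * ∫ z in (0:ℝ)..1, p z ^ 2 := by
  have hqc : Continuous q := continuous_iff_continuousAt.2 fun z => (hq z).continuousAt
  have hpc : Continuous p := continuous_iff_continuousAt.2 fun z => (hp z).continuousAt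
  have hparts : ∫ z in (0:ℝ)..1, (q' z * p z + q z * p' z) = q 1 * p 1 := by
    rw [integral_eq_sub_of_hasDerivAt (fun z _ => (hq z).mul (hp z))
      ((by fun_prop : Continuous fun z => q' z * p z + q z * p' z).intervalIntegrable 0 1)]
    simp only [Pi.mul_apply, hp₀, mul_zero, sub_zero]
  calc ∫ z in (0:ℝ)..1, (C * q z * p' z + ρ * p z * pt z)
      = ∫ z in (0:ℝ)..1, (C * (q' z * p z + q z * p' z) - b * p z ^ 2) := by
        refine integral_congr fun z hz => ?_
        rw [uIcc_of_le zero_le_one] at hz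
        linear_combination p z * hpde z hz
    _ = C * q 1 * p 1 - b * ∫ z in (0:ℝ)..1, p z ^ 2 := by
        rw [intervalIntegral.integral_sub
          ((by fun_prop : Continuous fun z => C * (q' z * p z + q z * p' z)).intervalIntegrable 0 1)
          ((by fun_prop : Continuous fun z => b * p z ^ 2).intervalIntegrable 0 1),
          intervalIntegral.integral_const_mul, intervalIntegral.integral_const_mul, hparts,
          mul_assoc]

noncomputable def closedLoopNormSq (ρ C pstar : ℝ) (wt wzt wtt : ℝ → ℝ → ℝ) (t : ℝ) : ℝ :=
  (∫ z in (0:ℝ)..1, ((C * wzt z t)^2 + (wtt z t)^2 + (wzt z t)^2 + (ρ * wtt z t)^2))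
    + (wt 1 t - pstar)^2

noncomputable def closedLoopStorage (ρ C Ki pstar : ℝ) (wt wzt wtt : ℝ → ℝ → ℝ) (t : ℝ) : ℝ :=
  (∫ z in (0:ℝ)..1, (C * wzt z t ^ 2 + ρ * wtt z t ^ 2) / 2) + Ki * (wt 1 t - pstar) ^ 2 / 2

lemma energy_density_eq (C ρ x y : ℝ) :
    (C * x ^ 2 + ρ * y ^ 2) / 2
      = (1/C * (C * x)^2 + ρ * y^2 + C * x^2 + 1/ρ * (ρ * y)^2) / 4 := by
  field_simp
  ring

lemma min_mul_le_energy_density {C ρ m : ℝ}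
    (h₁ : m ≤ 1/C) (h₂ : m ≤ C) (h₃ : m ≤ ρ) (h₄ : m ≤ 1/ρ) (x y : ℝ) :
    1/4 * m * ((C * x)^2 + y^2 + x^2 + (ρ * y)^2) ≤ (C * x ^ 2 + ρ * y ^ 2) / 2 := by
  rw [energy_density_eq]
  nlinarith [mul_le_mul_of_nonneg_right h₁ (sq_nonneg (C * x)),
    mul_le_mul_of_nonneg_right h₂ (sq_nonneg x), mul_le_mul_of_nonneg_right h₃ (sq_nonneg y),
    mul_le_mul_of_nonneg_right h₄ (sq_nonneg (ρ * y))]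

lemma energy_density_le_max_mul {C ρ M : ℝ}
    (h₁ : 1/C ≤ M) (h₂ : C ≤ M) (h₃ : ρ ≤ M) (h₄ : 1/ρ ≤ M) (x y : ℝ) :
    (C * x ^ 2 + ρ * y ^ 2) / 2 ≤ 1/4 * M * ((C * x)^2 + y^2 + x^2 + (ρ * y)^2) := by
  rw [energy_density_eq]
  nlinarith [mul_le_mul_of_nonneg_right h₁ (sq_nonneg (C * x)),
    mul_le_mul_of_nonneg_right h₂ (sq_nonneg x), mul_le_mul_of_nonneg_right h₃ (sq_nonneg y),
    mul_le_mul_of_nonneg_right h₄ (sq_nonneg (ρ * y))]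

lemma min_mul_closedLoopNormSq_le_closedLoopStorage (ρ C Ki pstar : ℝ) {m : ℝ}
    (hm : m ≤ min (min (1/C) C) (min (min ρ (1/ρ)) (2*Ki))) (wt : ℝ → ℝ → ℝ)
    {wzt wtt : ℝ → ℝ → ℝ} (hwzt : Continuous (uncurry wzt)) (hwtt : Continuous (uncurry wtt))
    (t : ℝ) :
    1/4 * m * closedLoopNormSq ρ C pstar wt wzt wtt t
      ≤ closedLoopStorage ρ C Ki pstar wt wzt wtt t := by
  simp only [le_min_iff] at hm
  obtain ⟨⟨h₁, h₂⟩, ⟨h₃, h₄⟩, h₅⟩ := hm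
  have hx := hwzt.uncurry_right t
  have hy := hwtt.uncurry_right t
  have hnorm : Continuous fun z =>
      (C * wzt z t)^2 + (wtt z t)^2 + (wzt z t)^2 + (ρ * wtt z t)^2 := by fun_prop
  have hdensity : Continuous fun z => (C * wzt z t ^ 2 + ρ * wtt z t ^ 2) / 2 := by fun_prop
  have hint := integral_mono_on (μ := volume) zero_le_one
    ((hnorm.intervalIntegrable 0 1).const_mul _) (hdensity.intervalIntegrable 0 1)
    fun z _ => min_mul_le_energy_density h₁ h₂ h₃ h₄ (wzt z t) (wtt z t)
  rw [intervalIntegral.integral_const_mul] at hint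
  unfold closedLoopNormSq closedLoopStorage
  linarith [mul_le_mul_of_nonneg_right h₅ (sq_nonneg (wt 1 t - pstar))]

lemma closedLoopStorage_le_max_mul_closedLoopNormSq (ρ C Ki pstar : ℝ) {M : ℝ}
    (hM : max (max (1/C) C) (max (max ρ (1/ρ)) (2*Ki)) ≤ M) (wt : ℝ → ℝ → ℝ)
    {wzt wtt : ℝ → ℝ → ℝ} (hwzt : Continuous (uncurry wzt)) (hwtt : Continuous (uncurry wtt))
    (t : ℝ) :
    closedLoopStorage ρ C Ki pstar wt wzt wtt t
      ≤ 1/4 * M * closedLoopNormSq ρ C pstar wt wzt wtt t := by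
  simp only [max_le_iff] at hM
  obtain ⟨⟨h₁, h₂⟩, ⟨h₃, h₄⟩, h₅⟩ := hM
  have hx := hwzt.uncurry_right t
  have hy := hwtt.uncurry_right t
  have hnorm : Continuous fun z =>
      (C * wzt z t)^2 + (wtt z t)^2 + (wzt z t)^2 + (ρ * wtt z t)^2 := by fun_prop
  have hdensity : Continuous fun z => (C * wzt z t ^ 2 + ρ * wtt z t ^ 2) / 2 := by fun_prop
  have hint := integral_mono_on (μ := volume) zero_le_one
    (hdensity.intervalIntegrable 0 1) ((hnorm.intervalIntegrable 0 1).const_mul _)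
    fun z _ => energy_density_le_max_mul h₁ h₂ h₃ h₄ (wzt z t) (wtt z t)
  rw [intervalIntegral.integral_const_mul] at hint
  unfold closedLoopNormSq closedLoopStorage
  linarith [mul_le_mul_of_nonneg_right h₅ (sq_nonneg (wt 1 t - pstar))]

lemma hasDerivAt_closedLoopStorage (ρ C Ki pstar : ℝ) {wt wzt wtt wztt wttt : ℝ → ℝ → ℝ}
    (hwtt : ∀ s, HasDerivAt (fun τ => wt 1 τ) (wtt 1 s) s)
    (hwztt : ∀ z s, HasDerivAt (fun τ => wzt z τ) (wztt z s) s)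
    (hwttt : ∀ z s, HasDerivAt (fun τ => wtt z τ) (wttt z s) s)
    (hwztc : Continuous (uncurry wzt)) (hwttc : Continuous (uncurry wtt))
    (hwzttc : Continuous (uncurry wztt)) (hwtttc : Continuous (uncurry wttt)) (s : ℝ) :
    HasDerivAt (closedLoopStorage ρ C Ki pstar wt wzt wtt)
      ((∫ z in (0:ℝ)..1, (C * wzt z s * wztt z s + ρ * wtt z s * wttt z s))
        + Ki * (wt 1 s - pstar) * wtt 1 s) s := by
  have hdensity : ∀ z τ, HasDerivAt (fun σ => (C * wzt z σ ^ 2 + ρ * wtt z σ ^ 2) / 2)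
      (C * wzt z τ * wztt z τ + ρ * wtt z τ * wttt z τ) τ := fun z τ =>
    ((((hwztt z τ).pow 2).const_mul C).add (((hwttt z τ).pow 2).const_mul ρ)).div_const 2
      |>.congr_deriv (by ring)
  have hrate : Continuous
      (uncurry fun z τ => C * wzt z τ * wztt z τ + ρ * wtt z τ * wttt z τ) :=
    ((continuous_const.mul hwztc).mul hwzttc).add ((continuous_const.mul hwttc).mul hwtttc)
  have hx := hwztc.uncurry_right 0
  have hy := hwttc.uncurry_right 0
  have hdensity₀ : Continuous fun z => (C * wzt z 0 ^ 2 + ρ * wtt z 0 ^ 2) / 2 := by fun_prop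
  have hintegral := ((((hwtt s).sub_const pstar).pow 2).const_mul Ki).div_const 2
  exact (hasDerivAt_intervalIntegral_of_hasDerivAt_of_continuous hdensity hrate
    (hdensity₀.intervalIntegrable 0 1) s).add (hintegral.congr_deriv (by ring))

lemma closedLoopStorage_antitoneOn {ρ C b Ki Kp : ℝ} (pstar : ℝ) (hb : 0 ≤ b) (hKp : 0 ≤ Kp)
    {w wt wzt wtt wzz wzzt wztt wttt : ℝ → ℝ → ℝ}
    (hwt : ∀ s, HasDerivAt (fun τ => w 0 τ) (wt 0 s) s)
    (hwtt : ∀ z s, HasDerivAt (fun τ => wt z τ) (wtt z s) s)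
    (hwzzt : ∀ z s, HasDerivAt (fun τ => wzz z τ) (wzzt z s) s)
    (hwzzt' : ∀ z s, HasDerivAt (fun ζ => wzt ζ s) (wzzt z s) z)
    (hwztt : ∀ z s, HasDerivAt (fun τ => wzt z τ) (wztt z s) s)
    (hwztt' : ∀ z s, HasDerivAt (fun ζ => wtt ζ s) (wztt z s) z)
    (hwttt : ∀ z s, HasDerivAt (fun τ => wtt z τ) (wttt z s) s)
    (hwtc : Continuous (uncurry wt)) (hwztc : Continuous (uncurry wzt))
    (hwttc : Continuous (uncurry wtt)) (hwzztc : Continuous (uncurry wzzt))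
    (hwzttc : Continuous (uncurry wztt)) (hwtttc : Continuous (uncurry wttt))
    (hpde : ∀ z ∈ Icc (0:ℝ) 1, ∀ t : ℝ, 0 ≤ t → ρ * wtt z t = C * wzz z t - b * wt z t)
    (hclamp : ∀ t : ℝ, 0 ≤ t → w 0 t = 0)
    (hcl : ∀ t : ℝ, 0 ≤ t → C * wzt 1 t = -Ki * (wt 1 t - pstar) - Kp * wtt 1 t) :
    AntitoneOn (closedLoopStorage ρ C Ki pstar wt wzt wtt) (Ici 0) := by
  have hwt₀ : EqOn (fun τ => wt 0 τ) 0 (Ici 0) :=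
    eqOn_Ici_of_hasDerivAt hwt (fun _ => hasDerivAt_const _ 0) (hwtc.uncurry_left 0)
      continuous_const hclamp
  have hwtt₀ : EqOn (fun τ => wtt 0 τ) 0 (Ici 0) :=
    eqOn_Ici_of_hasDerivAt (hwtt 0) (fun _ => hasDerivAt_const _ 0) (hwttc.uncurry_left 0)
      continuous_const hwt₀
  have hpde_t : ∀ z ∈ Icc (0:ℝ) 1,
      EqOn (fun τ => ρ * wttt z τ) (fun τ => C * wzzt z τ - b * wtt z τ) (Ici 0) := fun z hz =>
    eqOn_Ici_of_hasDerivAt (fun τ => (hwttt z τ).const_mul ρ)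
      (fun τ => ((hwzzt z τ).const_mul C).sub ((hwtt z τ).const_mul b))
      (continuous_const.mul (hwtttc.uncurry_left z))
      ((continuous_const.mul (hwzztc.uncurry_left z)).sub
        (continuous_const.mul (hwttc.uncurry_left z)))
      (hpde z hz)
  have hV := hasDerivAt_closedLoopStorage ρ C Ki pstar (hwtt 1) hwztt hwttt hwztc hwttc hwzttc
    hwtttc
  refine antitoneOn_of_deriv_nonpos (convex_Ici 0)
    (continuous_iff_continuousAt.2 fun s => (hV s).continuousAt).continuousOn
    (fun s _ => (hV s).differentiableAt.differentiableWithinAt) fun s hs => ?_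
  have hs₀ : 0 ≤ s := (interior_subset hs : s ∈ Ici 0)
  rw [(hV s).deriv, integral_energy_flux (hwzzt' · s) (hwztt' · s) (hwzztc.uncurry_right s)
    (hwzttc.uncurry_right s) (fun z hz => hpde_t z hz hs₀) (hwtt₀ hs₀)]
  have hI : 0 ≤ ∫ z in (0:ℝ)..1, wtt z s ^ 2 :=
    intervalIntegral.integral_nonneg zero_le_one fun z _ => sq_nonneg _
  have hdiss : C * wzt 1 s * wtt 1 s - b * (∫ z in (0:ℝ)..1, wtt z s ^ 2)
      + Ki * (wt 1 s - pstar) * wtt 1 s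
      = -(Kp * wtt 1 s ^ 2) - b * ∫ z in (0:ℝ)..1, wtt z s ^ 2 := by
    linear_combination wtt 1 s * hcl s hs₀
  rw [hdiss]
  linarith [mul_nonneg hKp (sq_nonneg (wtt 1 s)), mul_nonneg hb hI]

theorem output_shaping_stability_bound_general
    (ρ C b : ℝ) (hρ : 0 < ρ) (hC : 0 < C) (hb : 0 < b)
    (w wt wzz wzt wtt : ℝ → ℝ → ℝ)
    (hwt : ∀ z t : ℝ, HasDerivAt (fun τ => w z τ) (wt z t) t)
    (hwtt : ∀ z t : ℝ, HasDerivAt (fun τ => wt z τ) (wtt z t) t)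
    (hwtc : Continuous (Function.uncurry wt))
    (hwztc : Continuous (Function.uncurry wzt))
    (hwttc : Continuous (Function.uncurry wtt))
    (hpde : ∀ z ∈ Set.Icc (0:ℝ) 1, ∀ t : ℝ, 0 ≤ t →
      ρ * wtt z t = C * wzz z t - b * wt z t)
    (hclamp : ∀ t : ℝ, 0 ≤ t → w 0 t = 0)
    (wzzt wztt wttt : ℝ → ℝ → ℝ)
    (hwzzt : ∀ z t : ℝ, HasDerivAt (fun τ => wzz z τ) (wzzt z t) t)
    (hwzzt' : ∀ z t : ℝ, HasDerivAt (fun ζ => wzt ζ t) (wzzt z t) z)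
    (hwztt : ∀ z t : ℝ, HasDerivAt (fun τ => wzt z τ) (wztt z t) t)
    (hwztt' : ∀ z t : ℝ, HasDerivAt (fun ζ => wtt ζ t) (wztt z t) z)
    (hwttt : ∀ z t : ℝ, HasDerivAt (fun τ => wtt z τ) (wttt z t) t)
    (hwzztc : Continuous (Function.uncurry wzzt))
    (hwzttc : Continuous (Function.uncurry wztt))
    (hwtttc : Continuous (Function.uncurry wttt))
    (Ki Kp pstar : ℝ) (hKi : 0 < Ki) (hKp : 0 < Kp)
    (hcl : ∀ t : ℝ, 0 ≤ t →
      C * wzt 1 t = -Ki * (wt 1 t - pstar) - Kp * wtt 1 t) :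
    ∀ t : ℝ, 0 ≤ t →
      ((∫ z in (0:ℝ)..1, ((C * wzt z t)^2 + (wtt z t)^2 + (wzt z t)^2 + (ρ * wtt z t)^2)) + (wt 1 t - pstar)^2)
        ≤ ((1/4) * max (max (1/C) C) (max (max ρ (1/ρ)) (2*Ki)))
            / ((1/4) * min (min (1/C) C) (min (min ρ (1/ρ)) (2*Ki)))
          * ((∫ z in (0:ℝ)..1, ((C * wzt z (0:ℝ))^2 + (wtt z (0:ℝ))^2 + (wzt z (0:ℝ))^2 + (ρ * wtt z (0:ℝ))^2)) + (wt 1 (0:ℝ) - pstar)^2) := by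
  intro t ht
  have hγ₁ : 0 < (1/4) * min (min (1/C) C) (min (min ρ (1/ρ)) (2*Ki)) := by positivity
  have hlow := min_mul_closedLoopNormSq_le_closedLoopStorage ρ C Ki pstar le_rfl wt hwztc hwttc t
  have hdecay := closedLoopStorage_antitoneOn pstar hb.le hKp.le (hwt 0) hwtt hwzzt hwzzt' hwztt
    hwztt' hwttt hwtc hwztc hwttc hwzztc hwzttc hwtttc hpde hclamp hcl self_mem_Ici ht ht
  have hupp := closedLoopStorage_le_max_mul_closedLoopNormSq ρ C Ki pstar le_rfl wt hwztc hwttc 0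
  change closedLoopNormSq ρ C pstar wt wzt wtt t ≤ _ * closedLoopNormSq ρ C pstar wt wzt wtt 0
  rw [div_mul_eq_mul_div, le_div_iff₀ hγ₁]
  linarith

/-- Proposition 2, concrete stability bound for the output-shaping closed
loop: M(t) ≤ (γ₂/γ₁)·M(0) for all t ≥ 0. -/
theorem output_shaping_stability_bound
    (ρ C b : ℝ) (hρ : 0 < ρ) (hC : 0 < C) (hb : 0 < b)
    (w wz wt wzz wzt wtt : ℝ → ℝ → ℝ)
    (hwz : ∀ z t : ℝ, HasDerivAt (fun ζ => w ζ t) (wz z t) z)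
    (hwt : ∀ z t : ℝ, HasDerivAt (fun τ => w z τ) (wt z t) t)
    (hwzz : ∀ z t : ℝ, HasDerivAt (fun ζ => wz ζ t) (wzz z t) z)
    (hwzt : ∀ z t : ℝ, HasDerivAt (fun ζ => wt ζ t) (wzt z t) z)
    (hwzt' : ∀ z t : ℝ, HasDerivAt (fun τ => wz z τ) (wzt z t) t)
    (hwtt : ∀ z t : ℝ, HasDerivAt (fun τ => wt z τ) (wtt z t) t)
    (hwzc : Continuous (Function.uncurry wz))
    (hwtc : Continuous (Function.uncurry wt))
    (hwzzc : Continuous (Function.uncurry wzz))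
    (hwztc : Continuous (Function.uncurry wzt))
    (hwttc : Continuous (Function.uncurry wtt))
    (hpde : ∀ z ∈ Set.Icc (0:ℝ) 1, ∀ t : ℝ, 0 ≤ t →
      ρ * wtt z t = C * wzz z t - b * wt z t)
    (hclamp : ∀ t : ℝ, 0 ≤ t → w 0 t = 0)
    (wzzt wztt wttt : ℝ → ℝ → ℝ)
    (hwzzt : ∀ z t : ℝ, HasDerivAt (fun τ => wzz z τ) (wzzt z t) t)
    (hwzzt' : ∀ z t : ℝ, HasDerivAt (fun ζ => wzt ζ t) (wzzt z t) z)
    (hwztt : ∀ z t : ℝ, HasDerivAt (fun τ => wzt z τ) (wztt z t) t)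
    (hwztt' : ∀ z t : ℝ, HasDerivAt (fun ζ => wtt ζ t) (wztt z t) z)
    (hwttt : ∀ z t : ℝ, HasDerivAt (fun τ => wtt z τ) (wttt z t) t)
    (hwzztc : Continuous (Function.uncurry wzzt))
    (hwzttc : Continuous (Function.uncurry wztt))
    (hwtttc : Continuous (Function.uncurry wttt))
    (Ki Kp pstar : ℝ) (hKi : 0 < Ki) (hKp : 0 < Kp)
    (hcl : ∀ t : ℝ, 0 ≤ t →
      C * wzt 1 t = -Ki * (wt 1 t - pstar) - Kp * wtt 1 t) :
    ∀ t : ℝ, 0 ≤ t →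
      ((∫ z in (0:ℝ)..1, ((C * wzt z t)^2 + (wtt z t)^2 + (wzt z t)^2 + (ρ * wtt z t)^2)) + (wt 1 t - pstar)^2)
        ≤ ((1/4) * max (max (1/C) C) (max (max ρ (1/ρ)) (2*Ki)))
            / ((1/4) * min (min (1/C) C) (min (min ρ (1/ρ)) (2*Ki)))
          * ((∫ z in (0:ℝ)..1, ((C * wzt z (0:ℝ))^2 + (wtt z (0:ℝ))^2 + (wzt z (0:ℝ))^2 + (ρ * wtt z (0:ℝ))^2)) + (wt 1 (0:ℝ) - pstar)^2) :=
  output_shaping_stability_bound_general ρ C b hρ hC hb w wt wzz wzt wtt hwt hwtt hwtc hwztc hwttc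
    hpde hclamp wzzt wztt wttt hwzzt hwzzt' hwztt hwztt' hwttt hwzztc hwzttc hwtttc Ki Kp pstar hKi
    hKp hcl
end
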